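/- arXiv:2504.15752 — 3 statements merged into one kernel-verified Lean document; each statement's English description precedes it below -/
import Mathlib

section
/- Let f : ℝⁿ → ℝ be differentiable, λ > 0, and x ∈ ℝⁿ. Define Ĵ₊ = {i : x_i > 0 and g(x)_i > 0} and Ĵ₋ = {i : x_i < 0 and g(x)_i < 0}. Then for every t > 0 satisfying t ≥ g(x)_i / x_i for every i ∈ Ĵ₊ ∪ Ĵ₋ (in particular for every t > 0 when Ĵ₊ ∪ Ĵ₋ is empty), one has G_t(x) = g(x). -/
/-! On each coordinate, `G_t(x)_i` is the projection of `t x_i` onto `[∇f(x)_i - lam, ∇f(x)_i + lam]`.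
For `x_i > 0` the hypothesis on `t` (or the sign of `g(x)_i`) puts `t x_i` at or above the upper
end, which is `g(x)_i`; symmetrically for `x_i < 0`; for `x_i = 0` the projection of `0` is
`∇f(x)_i` minus its clamp to `[-lam, lam]`, which is `g(x)_i`. -/

open scoped RealInnerProductSpace

noncomputable section

/-- `ℝⁿ` with the Euclidean norm. -/
abbrev E (n : ℕ) := EuclideanSpace ℝ (Fin n)

/-- The vector `g(x)` measuring first-order stationarity of `f + lam‖·‖₁`. -/
def gvec (n : ℕ) (f : E n → ℝ) (lam : ℝ) (x : E n) : E n := WithLp.toLp 2 fun i =>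
  if 0 < x i then gradient f x i + lam
  else if x i < 0 then gradient f x i - lam
  else gradient f x i - min (max (-lam) (gradient f x i)) lam

/-- The proximal-gradient residual `G_t(x) = t (x - prox_{(lam/t)‖·‖₁}(x - ∇f(x)/t))`. -/
def Gres (n : ℕ) (f : E n → ℝ) (lam t : ℝ) (x : E n) : E n := WithLp.toLp 2 fun i =>
  if (gradient f x i + lam) / t < x i then gradient f x i + lam
  else if x i < (gradient f x i - lam) / t then gradient f x i - lam
  else t * x i

/-- The proximal-gradient update `P_t(x) = prox_{(lam/t)‖·‖₁}(x - ∇f(x)/t)` (soft-thresholding). -/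
def Pt (n : ℕ) (f : E n → ℝ) (lam t : ℝ) (x : E n) : E n := WithLp.toLp 2 fun i =>
  if lam / t < x i - gradient f x i / t then x i - gradient f x i / t - lam / t
  else if x i - gradient f x i / t < -(lam / t) then x i - gradient f x i / t + lam / t
  else 0

/-- The objective `φ(x) = f(x) + lam ‖x‖₁`. -/
def phi (n : ℕ) (f : E n → ℝ) (lam : ℝ) (x : E n) : ℝ := f x + lam * ∑ i, |x i|

/-- The Hessian of `f` at `x`, as a continuous linear map. -/
def hess (n : ℕ) (f : E n → ℝ) (x : E n) : E n →L[ℝ] E n := fderiv ℝ (gradient f) x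

/-- The scaling map `S_{x,ε}`: identity on coordinates with `|x_i| > √ε`, multiplication by
`x_i` on the others. -/
def Smap (n : ℕ) (x : E n) (eps : ℝ) (u : E n) : E n := WithLp.toLp 2 fun i =>
  if Real.sqrt eps < |x i| then u i else x i * u i

/-- The relaxed first-order residual vector `g^ε(x)`. -/
def gveps (n : ℕ) (f : E n → ℝ) (lam eps : ℝ) (x : E n) : E n := WithLp.toLp 2 fun i =>
  if Real.sqrt eps < x i then gradient f x i + lam
  else if x i < -Real.sqrt eps then gradient f x i - lam
  else gradient f x i -
    min (max (-(lam + eps ^ ((3:ℝ)/4))) (gradient f x i)) (lam + eps ^ ((3:ℝ)/4))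

lemma proxResidual_eq_max_min {d lam t y : ℝ} (hlam : 0 ≤ lam) (ht : 0 < t) :
    (if (d + lam) / t < y then d + lam else if y < (d - lam) / t then d - lam else t * y) =
      max (d - lam) (min (d + lam) (t * y)) := by
  simp only [div_lt_iff₀ ht, lt_div_iff₀ ht, mul_comm y t]
  split_ifs with hup hlow
  · rw [min_eq_left hup.le, max_eq_right (by linarith)]
  · rw [min_eq_right (by linarith), max_eq_left hlow.le]
  · rw [min_eq_right (not_lt.1 hup), max_eq_right (not_lt.1 hlow)]

lemma sub_min_max_eq_max_min (d lam : ℝ) :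
    d - min (max (-lam) d) lam = max (d - lam) (min (d + lam) 0) := by
  rw [← max_sub_sub_left, ← min_sub_sub_left, sub_neg_eq_add, sub_self, max_comm]

lemma le_mul_of_div_le_of_pos {s x t : ℝ} (hx : 0 < x) (ht : 0 < t) (h : 0 < s → s / x ≤ t) :
    s ≤ t * x := by
  rcases le_or_gt s 0 with hs | hs
  · nlinarith
  · exact (div_le_iff₀ hx).1 (h hs)

lemma mul_le_of_div_le_of_neg {s x t : ℝ} (hx : x < 0) (ht : 0 < t) (h : s < 0 → s / x ≤ t) :
    t * x ≤ s := by
  rcases le_or_gt 0 s with hs | hs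
  · nlinarith
  · exact (div_le_iff_of_neg hx).1 (h hs)

lemma Gres_apply {n : ℕ} (f : E n → ℝ) {lam t : ℝ} (hlam : 0 ≤ lam) (ht : 0 < t) (x : E n)
    (i : Fin n) :
    Gres n f lam t x i = max (gradient f x i - lam) (min (gradient f x i + lam) (t * x i)) :=
  proxResidual_eq_max_min hlam ht

lemma gvec_apply_of_pos {n : ℕ} (f : E n → ℝ) (lam : ℝ) {x : E n} {i : Fin n} (hx : 0 < x i) :
    gvec n f lam x i = gradient f x i + lam := if_pos hx

lemma gvec_apply_of_neg {n : ℕ} (f : E n → ℝ) (lam : ℝ) {x : E n} {i : Fin n} (hx : x i < 0) :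
    gvec n f lam x i = gradient f x i - lam := (if_neg hx.not_gt).trans (if_pos hx)

lemma gvec_apply_of_eq_zero {n : ℕ} (f : E n → ℝ) (lam : ℝ) {x : E n} {i : Fin n}
    (hx : x i = 0) :
    gvec n f lam x i = max (gradient f x i - lam) (min (gradient f x i + lam) 0) := by
  simp only [gvec, PiLp.toLp_apply, hx, lt_irrefl, if_false]
  exact sub_min_max_eq_max_min _ _

theorem stmt4_general {n : ℕ} (f : E n → ℝ) (lam : ℝ) (hlam : 0 < lam)
    (x : E n) (t : ℝ) (ht : 0 < t)
    (hlarge : ∀ i, (0 < x i ∧ 0 < gvec n f lam x i) ∨ (x i < 0 ∧ gvec n f lam x i < 0) →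
      gvec n f lam x i / x i ≤ t) :
    Gres n f lam t x = gvec n f lam x := by
  ext i
  rw [Gres_apply f hlam.le ht]
  rcases lt_trichotomy (x i) 0 with hneg | hzero | hpos
  · have hbelow : t * x i ≤ gvec n f lam x i :=
      mul_le_of_div_le_of_neg hneg ht fun hg => hlarge i (.inr ⟨hneg, hg⟩)
    rw [gvec_apply_of_neg f lam hneg] at hbelow ⊢
    exact max_eq_left (min_le_of_right_le hbelow)
  · rw [hzero, mul_zero, gvec_apply_of_eq_zero f lam hzero]
  · have habove : gvec n f lam x i ≤ t * x i :=
      le_mul_of_div_le_of_pos hpos ht fun hg => hlarge i (.inl ⟨hpos, hg⟩)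
    rw [gvec_apply_of_pos f lam hpos] at habove ⊢
    rw [min_eq_left habove, max_eq_right (by linarith)]

/-- For all `t > 0` at least as large as `g(x)_i / x_i` on the index sets
`Ĵ₊ = {i : x_i > 0, g(x)_i > 0}` and `Ĵ₋ = {i : x_i < 0, g(x)_i < 0}`, one has
`G_t(x) = g(x)`. -/
theorem stmt4 {n : ℕ} (f : E n → ℝ) (hf : Differentiable ℝ f) (lam : ℝ) (hlam : 0 < lam)
    (x : E n) (t : ℝ) (ht : 0 < t)
    (hlarge : ∀ i, (0 < x i ∧ 0 < gvec n f lam x i) ∨ (x i < 0 ∧ gvec n f lam x i < 0) →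
      gvec n f lam x i / x i ≤ t) :
    Gres n f lam t x = gvec n f lam x :=
  stmt4_general f lam hlam x t ht hlarge
end
end

section
/- Assume f is twice differentiable and satisfies the cubic upper bound with constant L_H > 0, and let ε > 0. Let x ∈ ℝⁿ and let d ∈ ℝⁿ satisfy d_i = 0 whenever |x_i| ≤ √ε. Define J₊ = {i : x_i > √ε and d_i < 0} and J₋ = {i : x_i < −√ε and d_i > 0}, and set t₊ = min_{i∈J₊}(−x_i/d_i) and t₋ = min_{i∈J₋}(−x_i/d_i), each taken as +∞ when the corresponding set is empty. Then for every t ∈ (0, min{t₊, t₋}]: φ(x + t·d) ≤ φ(x) + t·⟨g(x), d⟩ + (t²/2)·⟨d, ∇²f(x)·d⟩ + (L_H/6)·t³·‖d‖³. -/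
open scoped RealInnerProductSpace

/-!
Along `x + t d` no coordinate of `x` changes sign before the breakpoints `t₊, t₋`, and `d`
vanishes where `x` does, so the `ℓ¹` term is affine in `t` with slope
`λ ∑ sign(xᵢ) dᵢ = ⟪g(x) - ∇f(x), d⟫`. Adding this to the cubic upper bound on `f` between
`x` and `x + t d` gives the claim.
-/

theorem add_mul_nonneg_of_le_neg_div {a s t : ℝ} (ha : 0 ≤ a) (ht : 0 ≤ t)
    (hstep : s < 0 → t ≤ -a / s) : 0 ≤ a + t * s := by
  rcases le_or_gt 0 s with hs | hs
  · positivity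
  · have := hstep hs
    rw [le_div_iff_of_neg hs] at this
    linarith

theorem abs_add_mul_eq_abs_add_sign_mul {a s t : ℝ} (ht : 0 ≤ t) (h0 : a = 0 → s = 0)
    (hpos : 0 < a → s < 0 → t ≤ -a / s) (hneg : a < 0 → 0 < s → t ≤ -a / s) :
    |a + t * s| = |a| + t * (Real.sign a * s) := by
  rcases lt_trichotomy a 0 with ha | rfl | ha
  · have : 0 ≤ -a + t * -s := add_mul_nonneg_of_le_neg_div (by linarith) ht fun hs => by
      rw [neg_div_neg_eq]; exact hneg ha (by linarith)
    rw [abs_of_nonpos (by linarith), abs_of_neg ha, Real.sign_of_neg ha]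
    ring
  · simp [h0 rfl]
  · have : 0 ≤ a + t * s := add_mul_nonneg_of_le_neg_div ha.le ht (hpos ha)
    rw [abs_of_nonneg this, abs_of_pos ha, Real.sign_of_pos ha]
    ring

theorem inner_add_inner_smul_add_norm_smul_pow {F : Type*} [NormedAddCommGroup F]
    [InnerProductSpace ℝ F] (g d : F) (H : F →L[ℝ] F) (L : ℝ) {t : ℝ} (ht : 0 ≤ t) :
    ⟪g, t • d⟫ + 1 / 2 * ⟪t • d, H (t • d)⟫ + L / 6 * ‖t • d‖ ^ 3 =
      t * ⟪g, d⟫ + t ^ 2 / 2 * ⟪d, H d⟫ + L / 6 * t ^ 3 * ‖d‖ ^ 3 := by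
  rw [map_smul, real_inner_smul_left, real_inner_smul_right, real_inner_smul_right, norm_smul,
    Real.norm_of_nonneg ht]
  ring

section

variable {n : ℕ} {f : E n → ℝ} {lam : ℝ} {x : E n}

theorem gvec_apply_of_ne_zero {i : Fin n} (hx : x i ≠ 0) :
    gvec n f lam x i = gradient f x i + lam * Real.sign (x i) := by
  rcases hx.lt_or_gt with hx | hx
  · simp [gvec, hx, hx.not_gt, Real.sign_of_neg hx, sub_eq_add_neg]
  · simp [gvec, hx, Real.sign_of_pos hx]

theorem lam_mul_l1_add_smul {d : E n} {t : ℝ} (ht : 0 ≤ t)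
    (h0 : ∀ i, x i = 0 → d i = 0)
    (hpos : ∀ i, 0 < x i → d i < 0 → t ≤ -x i / d i)
    (hneg : ∀ i, x i < 0 → 0 < d i → t ≤ -x i / d i) :
    lam * ∑ i, |(x + t • d) i| =
      lam * ∑ i, |x i| + t * ⟪gvec n f lam x - gradient f x, d⟫ := by
  have hslope : ∀ i,
      (gvec n f lam x i - gradient f x i) * d i = lam * (Real.sign (x i) * d i) := by
    intro i
    by_cases hx : x i = 0
    · simp [h0 i hx]
    · rw [gvec_apply_of_ne_zero hx]
      ring
  have hinner : ⟪gvec n f lam x - gradient f x, d⟫ =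
      ∑ i, (gvec n f lam x i - gradient f x i) * d i := by
    simp only [PiLp.inner_apply, PiLp.sub_apply, Real.inner_apply, mul_comm]
  calc lam * ∑ i, |(x + t • d) i|
      = ∑ i, (lam * |x i| + t * ((gvec n f lam x i - gradient f x i) * d i)) := by
        rw [Finset.mul_sum]
        refine Finset.sum_congr rfl fun i _ => ?_
        rw [hslope, PiLp.add_apply, PiLp.smul_apply, smul_eq_mul,
          abs_add_mul_eq_abs_add_sign_mul ht (h0 i) (hpos i) (hneg i)]
        ring
    _ = lam * ∑ i, |x i| + t * ⟪gvec n f lam x - gradient f x, d⟫ := by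
        rw [Finset.sum_add_distrib, ← Finset.mul_sum, ← Finset.mul_sum, hinner]

end

theorem stmt11_general {n : ℕ} (f : E n → ℝ) (lam : ℝ)
    (LH : ℝ)
    (hcubic : ∀ x y : E n, f y ≤ f x + ⟪gradient f x, y - x⟫ +
      1 / 2 * ⟪y - x, hess n f x (y - x)⟫ + LH / 6 * ‖y - x‖ ^ 3)
    (ε : ℝ)
    (x d : E n) (hd : ∀ i, |x i| ≤ Real.sqrt ε → d i = 0)
    (t : ℝ) (ht : 0 < t)
    (htp : ∀ i, Real.sqrt ε < x i → d i < 0 → t ≤ -x i / d i)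
    (htm : ∀ i, x i < -Real.sqrt ε → 0 < d i → t ≤ -x i / d i) :
    phi n f lam (x + t • d) ≤
      phi n f lam x + t * ⟪gvec n f lam x, d⟫ +
        t ^ 2 / 2 * ⟪d, hess n f x d⟫ + LH / 6 * t ^ 3 * ‖d‖ ^ 3 := by
  have hsupp : ∀ i, d i ≠ 0 → Real.sqrt ε < |x i| := fun i hdi =>
    not_le.mp fun h => hdi (hd i h)
  have hl1 := lam_mul_l1_add_smul (f := f) (lam := lam) ht.le
    (fun i hx => hd i (by simp [hx, Real.sqrt_nonneg]))
    (fun i hx hdi => htp i (by simpa [abs_of_pos hx] using hsupp i hdi.ne) hdi)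
    (fun i hx hdi => htm i (by linarith [abs_of_neg hx ▸ hsupp i hdi.ne']) hdi)
  have hf := hcubic x (x + t • d)
  rw [add_sub_cancel_left] at hf
  rw [inner_sub_left] at hl1
  unfold phi
  linarith [inner_add_inner_smul_add_norm_smul_pow (gradient f x) d (hess n f x) LH ht.le]

/-- Descent-type upper bound on `φ(x + t d)` along a direction `d` supported
on the coordinates with `|x_i| > √ε`, for stepsizes `t` not exceeding the breakpoints
`t₊, t₋`. -/
theorem stmt11 {n : ℕ} (f : E n → ℝ) (hf1 : Differentiable ℝ f)
    (hf2 : Differentiable ℝ (gradient f)) (lam : ℝ) (hlam : 0 < lam)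
    (LH : ℝ) (hLH : 0 < LH)
    (hcubic : ∀ x y : E n, f y ≤ f x + ⟪gradient f x, y - x⟫ +
      1 / 2 * ⟪y - x, hess n f x (y - x)⟫ + LH / 6 * ‖y - x‖ ^ 3)
    (ε : ℝ) (hε : 0 < ε)
    (x d : E n) (hd : ∀ i, |x i| ≤ Real.sqrt ε → d i = 0)
    (t : ℝ) (ht : 0 < t)
    (htp : ∀ i, Real.sqrt ε < x i → d i < 0 → t ≤ -x i / d i)
    (htm : ∀ i, x i < -Real.sqrt ε → 0 < d i → t ≤ -x i / d i) :
    phi n f lam (x + t • d) ≤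
      phi n f lam x + t * ⟪gvec n f lam x, d⟫ +
        t ^ 2 / 2 * ⟪d, hess n f x d⟫ + LH / 6 * t ^ 3 * ‖d‖ ^ 3 :=
  stmt11_general f lam LH hcubic ε x d hd t ht htp htm
end

section
/- Assume f is twice differentiable, satisfies the Taylor gradient bound with constant L_H > 0, and ‖∇²f(z)‖_op ≤ U for all z ∈ ℝⁿ. Let x* ∈ ℝⁿ with g(x*) = 0, let x ∈ ℝⁿ, and let t > 0. Then ‖P_t(x) − x*‖ ≤ (1/t)·‖∇f(x) − ∇f(x*) + t·(x* − x)‖ ≤ (L_H/(2t))·‖x − x*‖² + ((U + t)/t)·‖x − x*‖, and consequently ‖x − P_t(x)‖ ≤ (L_H/(2t))·‖x − x*‖² + (U/t + 2)·‖x − x*‖. -/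
open scoped RealInnerProductSpace

noncomputable section

/-!
A stationary point `x*` of `φ` is a fixed point of the proximal-gradient map, because
`-∇f(x*) ∈ λ ∂‖x*‖₁`. Soft-thresholding is coordinatewise 1-Lipschitz, so
`‖P_t(x) - P_t(x*)‖ ≤ ‖(x - x*) - (∇f(x) - ∇f(x*))/t‖`. The Taylor bound, applied at `x*`,
together with `‖∇²f(x*)‖ ≤ U` controls `∇f(x) - ∇f(x*)`, and the triangle inequality through
`x*` gives the bound on `‖x - P_t(x)‖`.
-/

def softThreshold (c a : ℝ) : ℝ :=
  if c < a then a - c else if a < -c then a + c else 0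

lemma abs_softThreshold_sub_le {c : ℝ} (hc : 0 ≤ c) (a b : ℝ) :
    |softThreshold c a - softThreshold c b| ≤ |a - b| := by
  have h₁ := le_abs_self (a - b)
  have h₂ := neg_abs_le (a - b)
  unfold softThreshold
  split_ifs <;> rw [abs_sub_le_iff] <;> constructor <;> linarith

/-- The hypotheses say that `-h` is a subgradient of `c |·|` at `s`. -/
lemma softThreshold_sub_eq_self {c s h : ℝ} (hc : 0 ≤ c) (hpos : 0 < s → h = -c) (hneg : s < 0 → h = c)
    (hzero : s = 0 → |h| ≤ c) : softThreshold c (s - h) = s := by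
  unfold softThreshold
  rcases lt_trichotomy s 0 with hs | rfl | hs
  · rw [hneg hs, if_neg (by linarith), if_pos (by linarith)]
    ring
  · obtain ⟨hl, hu⟩ := abs_le.mp (hzero rfl)
    rw [if_neg (by linarith), if_neg (by linarith)]
  · rw [hpos hs, if_pos (by linarith)]
    ring

lemma norm_le_norm_of_forall_abs_le {n : ℕ} {u v : E n} (h : ∀ i, |u i| ≤ |v i|) :
    ‖u‖ ≤ ‖v‖ := by
  rw [EuclideanSpace.norm_eq, EuclideanSpace.norm_eq]
  gcongr with i
  simpa only [Real.norm_eq_abs] using h i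

section ProximalGradient

variable {n : ℕ} (f : E n → ℝ) {lam t : ℝ}

lemma Pt_apply (x : E n) (i : Fin n) :
    Pt n f lam t x i = softThreshold (lam / t) (x i - gradient f x i / t) :=
  rfl

lemma Pt_eq_self_of_gvec_eq_zero (hlam : 0 ≤ lam) (ht : 0 < t) {x : E n}
    (hx : gvec n f lam x = 0) : Pt n f lam t x = x := by
  ext i
  have hg : gvec n f lam x i = 0 := by rw [hx]; rfl
  simp only [gvec, WithLp.ofLp_toLp] at hg
  rw [Pt_apply]
  apply softThreshold_sub_eq_self (div_nonneg hlam ht.le)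
  · intro hpos
    rw [if_pos hpos] at hg
    rw [show gradient f x i = -lam by linarith, neg_div]
  · intro hneg
    rw [if_neg (by linarith), if_pos hneg] at hg
    rw [show gradient f x i = lam by linarith]
  · intro hzero
    rw [if_neg (by linarith), if_neg (by linarith)] at hg
    have hclamp : |gradient f x i| ≤ lam := by
      rw [abs_le]
      constructor
      · linarith [le_min (le_max_left (-lam) (gradient f x i)) (neg_le_self hlam)]
      · linarith [min_le_right (max (-lam) (gradient f x i)) lam]
    rw [abs_div, abs_of_pos ht]
    gcongr

lemma norm_Pt_sub_Pt_le (hlam : 0 ≤ lam) (ht : 0 < t) (x y : E n) :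
    ‖Pt n f lam t x - Pt n f lam t y‖ ≤
      ‖(x - y) - (1 / t) • (gradient f x - gradient f y)‖ := by
  refine norm_le_norm_of_forall_abs_le fun i => ?_
  simp only [PiLp.sub_apply, PiLp.smul_apply, smul_eq_mul, Pt_apply]
  convert abs_softThreshold_sub_le (div_nonneg hlam ht.le) _ _ using 2
  ring

lemma norm_gradient_sub_gradient_add_smul_le {LH U : ℝ}
    (htaylor : ∀ x y : E n,
      ‖gradient f y - gradient f x - hess n f x (y - x)‖ ≤ LH / 2 * ‖y - x‖ ^ 2)
    (hU : ∀ z : E n, ‖hess n f z‖ ≤ U) (ht : 0 ≤ t) (x y : E n) :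
    ‖gradient f x - gradient f y + t • (y - x)‖ ≤
      LH / 2 * ‖x - y‖ ^ 2 + (U + t) * ‖x - y‖ := by
  have hhess : ‖hess n f y (x - y)‖ ≤ U * ‖x - y‖ :=
    (hess n f y).le_of_opNorm_le (hU y) _
  have hshift : ‖t • (y - x)‖ = t * ‖x - y‖ := by
    rw [norm_smul, Real.norm_of_nonneg ht, norm_sub_rev]
  calc ‖gradient f x - gradient f y + t • (y - x)‖
      = ‖(gradient f x - gradient f y - hess n f y (x - y)) + hess n f y (x - y)
          + t • (y - x)‖ := by rw [sub_add_cancel]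
    _ ≤ ‖gradient f x - gradient f y - hess n f y (x - y)‖ + ‖hess n f y (x - y)‖
          + ‖t • (y - x)‖ := norm_add₃_le
    _ ≤ LH / 2 * ‖x - y‖ ^ 2 + U * ‖x - y‖ + t * ‖x - y‖ := by
          rw [hshift]; gcongr; exact htaylor y x
    _ = LH / 2 * ‖x - y‖ ^ 2 + (U + t) * ‖x - y‖ := by ring

end ProximalGradient

theorem stmt16_general {n : ℕ} (f : E n → ℝ) (lam : ℝ) (hlam : 0 < lam)
    (LH : ℝ)
    (htaylor : ∀ x y : E n,
      ‖gradient f y - gradient f x - hess n f x (y - x)‖ ≤ LH / 2 * ‖y - x‖ ^ 2)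
    (U : ℝ) (hU : ∀ z : E n, ‖hess n f z‖ ≤ U)
    (xstar : E n) (hstar : gvec n f lam xstar = 0)
    (x : E n) (t : ℝ) (ht : 0 < t) :
    ‖Pt n f lam t x - xstar‖ ≤
        1 / t * ‖gradient f x - gradient f xstar + t • (xstar - x)‖ ∧
    1 / t * ‖gradient f x - gradient f xstar + t • (xstar - x)‖ ≤
        LH / (2 * t) * ‖x - xstar‖ ^ 2 + (U + t) / t * ‖x - xstar‖ ∧
    ‖x - Pt n f lam t x‖ ≤
        LH / (2 * t) * ‖x - xstar‖ ^ 2 + (U / t + 2) * ‖x - xstar‖ := by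
  have hfirst : ‖Pt n f lam t x - xstar‖ ≤
      1 / t * ‖gradient f x - gradient f xstar + t • (xstar - x)‖ := by
    have hscale : (x - xstar) - (1 / t) • (gradient f x - gradient f xstar) =
        -((1 / t) • (gradient f x - gradient f xstar + t • (xstar - x))) := by
      match_scalars <;> field_simp
    calc ‖Pt n f lam t x - xstar‖
        = ‖Pt n f lam t x - Pt n f lam t xstar‖ := by
          rw [Pt_eq_self_of_gvec_eq_zero f hlam.le ht hstar]
      _ ≤ _ := norm_Pt_sub_Pt_le f hlam.le ht x xstar
      _ = _ := by rw [hscale, norm_neg, norm_smul, Real.norm_of_nonneg (by positivity)]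
  have hsecond : 1 / t * ‖gradient f x - gradient f xstar + t • (xstar - x)‖ ≤
      LH / (2 * t) * ‖x - xstar‖ ^ 2 + (U + t) / t * ‖x - xstar‖ := by
    calc _ ≤ 1 / t * (LH / 2 * ‖x - xstar‖ ^ 2 + (U + t) * ‖x - xstar‖) := by
          gcongr
          exact norm_gradient_sub_gradient_add_smul_le f htaylor hU ht.le x xstar
      _ = _ := by field_simp
  refine ⟨hfirst, hsecond, ?_⟩
  have hU0 : 0 ≤ U := (norm_nonneg _).trans (hU xstar)
  calc ‖x - Pt n f lam t x‖ ≤ ‖x - xstar‖ + ‖Pt n f lam t x - xstar‖ := by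
        simpa only [norm_sub_rev xstar] using norm_sub_le_norm_sub_add_norm_sub x xstar _
    _ ≤ ‖x - xstar‖ + (LH / (2 * t) * ‖x - xstar‖ ^ 2 + (U + t) / t * ‖x - xstar‖) := by
        gcongr; exact hfirst.trans hsecond
    _ = _ := by field_simp; ring

/-- Error bound for the proximal-gradient update against a stationary point
`x*` of `φ`: `‖P_t(x) - x*‖ ≤ (1/t)‖∇f(x) - ∇f(x*) + t(x* - x)‖
≤ (L_H/(2t))‖x - x*‖² + ((U + t)/t)‖x - x*‖`, and consequently
`‖x - P_t(x)‖ ≤ (L_H/(2t))‖x - x*‖² + (U/t + 2)‖x - x*‖`. -/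
theorem stmt16 {n : ℕ} (f : E n → ℝ) (hf1 : Differentiable ℝ f)
    (hf2 : Differentiable ℝ (gradient f)) (lam : ℝ) (hlam : 0 < lam)
    (LH : ℝ) (hLH : 0 < LH)
    (htaylor : ∀ x y : E n,
      ‖gradient f y - gradient f x - hess n f x (y - x)‖ ≤ LH / 2 * ‖y - x‖ ^ 2)
    (U : ℝ) (hU : ∀ z : E n, ‖hess n f z‖ ≤ U)
    (xstar : E n) (hstar : gvec n f lam xstar = 0)
    (x : E n) (t : ℝ) (ht : 0 < t) :
    ‖Pt n f lam t x - xstar‖ ≤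
        1 / t * ‖gradient f x - gradient f xstar + t • (xstar - x)‖ ∧
    1 / t * ‖gradient f x - gradient f xstar + t • (xstar - x)‖ ≤
        LH / (2 * t) * ‖x - xstar‖ ^ 2 + (U + t) / t * ‖x - xstar‖ ∧
    ‖x - Pt n f lam t x‖ ≤
        LH / (2 * t) * ‖x - xstar‖ ^ 2 + (U / t + 2) * ‖x - xstar‖ :=
  stmt16_general f lam hlam LH htaylor U hU xstar hstar x t ht
end
end
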